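/- Let (Ω,M) be a finite transformation monoid with M an inverse monoid. If M is transitive on Ω, then M is a group of permutations of Ω: every element of M is a bijection of Ω and its inverse map belongs to M. -/
import Mathlib

/-- In a finite setting, some positive iterate of any self-map is idempotent. -/
private lemma exists_idem_iterate {Ω : Type*} [Finite Ω] (t : Ω → Ω) :
    ∃ k, 0 < k ∧ t^[k + k] = t^[k] := by
  obtain ⟨a, b, hab, heq⟩ := Finite.exists_ne_map_eq_of_infinite (fun k : ℕ => t^[k])
  wlog h : a < b generalizing a b
  · exact this b a hab.symm heq.symm (by omega)
  have heq' : t^[a] = t^[b] := heq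
  set i := a
  set j := b
  set p := j - i with hp
  have hp1 : 0 < p := by omega
  have hstep : ∀ d, t^[i + d + p] = t^[i + d] := by
    intro d
    induction d with
    | zero =>
        rw [show i + 0 + p = j by omega, show i + 0 = i by omega]
        exact heq'.symm
    | succ d ih =>
        rw [show i + (d+1) + p = (i + d + p) + 1 by omega,
            show i + (d+1) = (i + d) + 1 from rfl,
            Function.iterate_succ', Function.iterate_succ', ih]
  have hstep' : ∀ a', i ≤ a' → t^[a' + p] = t^[a'] := by
    intro a' ha'
    obtain ⟨d, rfl⟩ : ∃ d, a' = i + d := ⟨a' - i, by omega⟩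
    exact hstep d
  have hmul : ∀ c, ∀ a', i ≤ a' → t^[a' + c * p] = t^[a'] := by
    intro c
    induction c with
    | zero => intro a' _; simp
    | succ c ih =>
        intro a' ha'
        rw [show a' + (c+1) * p = (a' + c * p) + p by ring,
            hstep' (a' + c * p) (by omega), ih a' ha']
  refine ⟨(i+1) * p, by positivity, ?_⟩
  have hk : i ≤ (i+1) * p := by nlinarith
  exact hmul (i+1) ((i+1) * p) hk

/-- A finite transitive transformation monoid `(Ω, M)` with `M` an
inverse monoid (each `m` has a unique `n` with `mnm = m` and `nmn = n`, written with
the right-action composition) is a group of permutations of `Ω`: every element is a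
bijection whose inverse map again belongs to `M`. -/
theorem transitive_inverse_monoid_is_group {Ω : Type*} [Fintype Ω]
    (S : Set (Ω → Ω)) (hid : id ∈ S) (hcomp : ∀ m ∈ S, ∀ n ∈ S, n ∘ m ∈ S)
    (hinv : ∀ m ∈ S, ∃! n : Ω → Ω, n ∈ S ∧ m ∘ n ∘ m = m ∧ n ∘ m ∘ n = n)
    (htrans : ∀ α β : Ω, ∃ m ∈ S, m α = β) :
    ∀ m ∈ S, Function.Bijective m ∧ ∃ n ∈ S, m ∘ n = id ∧ n ∘ m = id := by
  -- Step 1: the composite of two idempotents of `S` is idempotent.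
  have idem_comp : ∀ e ∈ S, ∀ f ∈ S, (∀ y, e (e y) = e y) → (∀ y, f (f y) = f y) →
      ∀ y, e (f (e (f y))) = e (f y) := by
    intro e heS f hfS he hf
    obtain ⟨x, ⟨hxS, hx1, hx2⟩, hxuniq⟩ := hinv (e ∘ f) (hcomp f hfS e heS)
    have hx1' : ∀ y, e (f (x (e (f y)))) = e (f y) := fun y => congrFun hx1 y
    have hx2' : ∀ y, x (e (f (x y))) = x y := fun y => congrFun hx2 y
    have hyS : f ∘ x ∘ e ∈ S := hcomp (x ∘ e) (hcomp e heS x hxS) f hfS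
    have hy1 : (e ∘ f) ∘ (f ∘ x ∘ e) ∘ (e ∘ f) = e ∘ f := by
      funext y; simp only [Function.comp_apply, he, hf, hx1']
    have hy2 : (f ∘ x ∘ e) ∘ (e ∘ f) ∘ (f ∘ x ∘ e) = f ∘ x ∘ e := by
      funext y; simp only [Function.comp_apply, he, hf, hx2']
    have hxy : f ∘ x ∘ e = x := hxuniq (f ∘ x ∘ e) ⟨hyS, hy1, hy2⟩
    have hxx : ∀ y, x (x y) = x y := by
      have h1 : ∀ y, (f ∘ x ∘ e) ((f ∘ x ∘ e) y) = (f ∘ x ∘ e) y := by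
        intro y; simp only [Function.comp_apply, hx2']
      rw [hxy] at h1
      exact h1
    obtain ⟨z, -, hzuniq⟩ := hinv x hxS
    have h2 : x = z := hzuniq x
      ⟨hxS, by funext y; simp only [Function.comp_apply, hxx],
        by funext y; simp only [Function.comp_apply, hxx]⟩
    have h3 : e ∘ f = z := hzuniq (e ∘ f) ⟨hcomp f hfS e heS, hx2, hx1⟩
    have hef : e ∘ f = x := h3.trans h2.symm
    have hef' : ∀ y, e (f y) = x y := fun y => congrFun hef y
    intro y
    simp only [hef', hxx]
  -- Step 2: idempotents of `S` commute.
  have comm : ∀ e ∈ S, ∀ f ∈ S, (∀ y, e (e y) = e y) → (∀ y, f (f y) = f y) →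
      ∀ y, e (f y) = f (e y) := by
    intro e heS f hfS he hf
    have hef := idem_comp e heS f hfS he hf
    have hfe := idem_comp f hfS e heS hf he
    obtain ⟨z, -, hzuniq⟩ := hinv (e ∘ f) (hcomp f hfS e heS)
    have h1 : e ∘ f = z := hzuniq (e ∘ f)
      ⟨hcomp f hfS e heS,
        by funext y; simp only [Function.comp_apply, hef],
        by funext y; simp only [Function.comp_apply, hef]⟩
    have h2 : f ∘ e = z := hzuniq (f ∘ e)
      ⟨hcomp e heS f hfS,
        by funext y; simp only [Function.comp_apply, he, hf, hef],
        by funext y; simp only [Function.comp_apply, he, hf, hfe]⟩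
    exact fun y => congrFun (h1.trans h2.symm) y
  -- Step 3: by transitivity, every idempotent of `S` is the identity.
  have key : ∀ e ∈ S, (∀ y, e (e y) = e y) → ∀ ω, e ω = ω := by
    intro e heS he ω
    obtain ⟨m, hmS, hm⟩ := htrans (e ω) ω
    have htS : m ∘ e ∈ S := hcomp e heS m hmS
    obtain ⟨k, hkpos, hkk⟩ := exists_idem_iterate (m ∘ e)
    have hiterS : ∀ j, (m ∘ e)^[j] ∈ S := by
      intro j
      induction j with
      | zero => simpa using hid
      | succ j ih => rw [Function.iterate_succ]; exact hcomp (m ∘ e) htS _ ih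
    have hfidem : ∀ y, (m ∘ e)^[k] ((m ∘ e)^[k] y) = (m ∘ e)^[k] y := by
      intro y
      rw [← Function.iterate_add_apply, hkk]
    have hfω' : ∀ j, (m ∘ e)^[j] ω = ω := by
      intro j
      induction j with
      | zero => rfl
      | succ j ih =>
          rw [Function.iterate_succ_apply', ih]
          show m (e ω) = ω
          exact hm
    have hfω : (m ∘ e)^[k] ω = ω := hfω' k
    have hfe : ∀ j, ∀ y, (m ∘ e)^[j+1] (e y) = (m ∘ e)^[j+1] y := by
      intro j
      induction j with
      | zero =>
          intro y
          show (m ∘ e) (e y) = (m ∘ e) y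
          show m (e (e y)) = m (e y)
          rw [he]
      | succ j ih =>
          intro y
          calc (m ∘ e)^[j+1+1] (e y) = (m ∘ e) ((m ∘ e)^[j+1] (e y)) :=
                Function.iterate_succ_apply' (m ∘ e) (j+1) (e y)
            _ = (m ∘ e) ((m ∘ e)^[j+1] y) := by rw [ih]
            _ = (m ∘ e)^[j+1+1] y := (Function.iterate_succ_apply' (m ∘ e) (j+1) y).symm
    obtain ⟨k', rfl⟩ : ∃ k', k = k' + 1 := ⟨k - 1, by omega⟩
    have hcomm := comm e heS ((m ∘ e)^[k'+1]) (hiterS (k'+1)) he hfidem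
    calc e ω = e ((m ∘ e)^[k'+1] ω) := by rw [hfω]
      _ = (m ∘ e)^[k'+1] (e ω) := hcomm ω
      _ = (m ∘ e)^[k'+1] ω := hfe k' ω
      _ = ω := hfω
  -- Step 4: conclude.
  intro m hmS
  obtain ⟨n, ⟨hnS, h1, h2⟩, -⟩ := hinv m hmS
  have h1' : ∀ y, m (n (m y)) = m y := fun y => congrFun h1 y
  have h2' : ∀ y, n (m (n y)) = n y := fun y => congrFun h2 y
  have hmn : ∀ ω, m (n ω) = ω := by
    intro ω
    exact key (m ∘ n) (hcomp n hnS m hmS)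
      (fun y => by simp only [Function.comp_apply]; rw [h2' y]) ω
  have hnm : ∀ ω, n (m ω) = ω := by
    intro ω
    exact key (n ∘ m) (hcomp m hmS n hnS)
      (fun y => by simp only [Function.comp_apply]; rw [h1' y]) ω
  refine ⟨⟨fun a b hab => ?_, fun b => ⟨n b, hmn b⟩⟩, n, hnS, funext hmn, funext hnm⟩
  rw [← hnm a, ← hnm b, hab]
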